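/- Fix ε ∈ (0, 1/2) and δ > 0 and set Z₀ = {(ℓ, u) ∈ ℝ² : g_ε(ℓ, u) ≥ δ}, where g_ε(ℓ, u) = ∫₀^∞ max{Φ(u − t) − Φ(ℓ + t) − (1 − ε), 0} dt. Then Z₀ is a closed convex subset of ℝ_{<0} × ℝ_{>0}. -/

import Mathlib

open MeasureTheory Set

/-- The standard Gaussian cumulative distribution function. -/
noncomputable def Phi (x : ℝ) : ℝ :=
  (∫ s in Set.Iic x, Real.exp (-s ^ 2 / 2)) / Real.sqrt (2 * Real.pi)

/-- `g ε ℓ u = ∫₀^∞ max{Φ(u − t) − Φ(ℓ + t) − (1 − ε), 0} dt`. -/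
noncomputable def g (ε ℓ u : ℝ) : ℝ :=
  ∫ t in Set.Ioi (0:ℝ), max (Phi (u - t) - Phi (ℓ + t) - (1 - ε)) 0

/-!
Write `F(p, t)` for the integrand of `g` at `p = (ℓ, u)`; it is antitone in `t`. Where `F > 0` we
have `1 - ε > 1/2`, hence `ℓ + t < 0 < u - t`, and there `Φ(u - t)` is concave and `Φ(ℓ + t)` is
convex, so `F` is jointly concave on its positivity set. By the layer-cake formula `g(p)` is the
integral over levels `y > 0` of the length `T_p(y)` of the interval `{t ≥ 0 | F(p, t) > y}`, and
concavity gives `T_r(l y₁ + m y₂) ≥ l T_p(y₁) + m T_q(y₂)` for `r = l p + m q`. Rescaling the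
levels by the heights `a = F(p, 0)`, `b = F(q, 0)` and `l a + m b` yields
`g(r) ≥ (l a + m b) (l g(p) / a + m g(q) / b) ≥ (l a + m b) (l / a + m / b) δ ≥ δ`
(one dimensional Brunn–Minkowski). Closedness holds because `g` is continuous: near a given
point the integrand vanishes outside a fixed compact range of `t`.
-/

open Real
open scoped ENNReal Pointwise

lemma lintegral_Ioi_eq_ofReal_mul_lintegral_comp_mul_left (T : ℝ → ℝ≥0∞) {k : ℝ} (hk : 0 < k) :
    ∫⁻ y in Ioi 0, T y = ENNReal.ofReal k * ∫⁻ s in Ioi 0, T (k * s) := by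
  have hpre : (k * ·) ⁻¹' Ioi 0 = Ioi 0 := by
    rw [preimage_const_mul_Ioi₀ _ hk, zero_div]
  conv_rhs => rw [← hpre]
  rw [← (measurableEmbedding_mulLeft₀ hk.ne').lintegral_map,
    ← Measure.restrict_map (measurable_const_mul k) measurableSet_Ioi,
    Real.map_volume_mul_left hk.ne', Measure.restrict_smul, lintegral_smul_measure, smul_eq_mul,
    ← mul_assoc, ← ENNReal.ofReal_mul hk.le, abs_of_pos (inv_pos.mpr hk), mul_inv_cancel₀ hk.ne',
    ENNReal.ofReal_one, one_mul]

lemma volume_eq_ofReal_sSup {S : Set ℝ} (hS : S ⊆ Ici 0) (hdown : ∀ t ∈ S, Icc 0 t ⊆ S)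
    (hbdd : BddAbove S) : volume S = ENNReal.ofReal (sSup S) := by
  rcases S.eq_empty_or_nonempty with rfl | hne
  · simp
  have hIoo : Ioo 0 (sSup S) ⊆ S := fun s hs ↦ by
    obtain ⟨t, ht, hst⟩ := exists_lt_of_lt_csSup hne hs.2
    exact hdown t ht ⟨hs.1.le, hst.le⟩
  have hIcc : S ⊆ Icc 0 (sSup S) := fun t ht ↦ ⟨hS ht, le_csSup hbdd ht⟩
  refine le_antisymm ?_ ?_
  · simpa using measure_mono (μ := volume) hIcc
  · simpa using measure_mono (μ := volume) hIoo

lemma mul_sSup_add_mul_sSup_le_of_subset {A B C : Set ℝ} {l m : ℝ} (hl : 0 ≤ l) (hm : 0 ≤ m)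
    (hA : A.Nonempty) (hB : B.Nonempty) (hAb : BddAbove A) (hBb : BddAbove B) (hC : BddAbove C)
    (hsub : l • A + m • B ⊆ C) : l * sSup A + m * sSup B ≤ sSup C := by
  rw [← smul_eq_mul, ← smul_eq_mul, ← Real.sSup_smul_of_nonneg hl, ← Real.sSup_smul_of_nonneg hm,
    ← csSup_add hA.smul_set (hAb.smul_of_nonneg hl) hB.smul_set (hBb.smul_of_nonneg hm)]
  exact csSup_le_csSup hC (hA.smul_set.add hB.smul_set) hsub

lemma one_le_mul_add_div_add_div {a b l m : ℝ} (ha : 0 < a) (hb : 0 < b) (hl : 0 ≤ l) (hm : 0 ≤ m)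
    (hlm : l + m = 1) : 1 ≤ (l * a + m * b) * (l / a + m / b) := by
  rw [← sub_nonneg]
  have key : (l * a + m * b) * (l / a + m / b) - 1 = l * m * (a - b) ^ 2 / (a * b) := by
    field_simp
    linear_combination a * b * (l + m + 1) * hlm
  rw [key]
  positivity

def superlevelSet (φ : ℝ → ℝ) (y : ℝ) : Set ℝ := {t | 0 ≤ t ∧ y < φ t}

section Antitone

variable {φ : ℝ → ℝ} {y : ℝ}

lemma lintegral_Ici_eq_lintegral_volume_superlevelSet (hnonneg : ∀ t, 0 ≤ φ t)
    (hanti : Antitone φ) :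
    ∫⁻ t in Ici 0, ENNReal.ofReal (φ t) = ∫⁻ y in Ioi 0, volume (superlevelSet φ y) := by
  rw [lintegral_eq_lintegral_meas_lt _ (.of_forall hnonneg) hanti.measurable.aemeasurable]
  congr! 2 with y
  rw [Measure.restrict_apply' measurableSet_Ici, superlevelSet, inter_comm]
  rfl

lemma superlevelSet_eq_empty (hanti : Antitone φ) (hy : φ 0 ≤ y) : superlevelSet φ y = ∅ :=
  eq_empty_of_forall_notMem fun _ ht ↦ (ht.2.trans_le (hanti ht.1)).not_ge hy

lemma bddAbove_superlevelSet (hbdd : BddAbove (Function.support φ)) (hy : 0 ≤ y) :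
    BddAbove (superlevelSet φ y) :=
  hbdd.mono fun _ ht ↦ (hy.trans_lt ht.2).ne'

lemma volume_superlevelSet (hanti : Antitone φ) (hbdd : BddAbove (Function.support φ))
    (hy : 0 ≤ y) : volume (superlevelSet φ y) = ENNReal.ofReal (sSup (superlevelSet φ y)) :=
  volume_eq_ofReal_sSup (fun _ ht ↦ ht.1) (fun _ ht _ hs ↦ ⟨hs.1, ht.2.trans_le (hanti hs.2)⟩)
    (bddAbove_superlevelSet hbdd hy)

lemma pos_of_lintegral_ne_zero (hanti : Antitone φ)
    (h : ∫⁻ t in Ici 0, ENNReal.ofReal (φ t) ≠ 0) : 0 < φ 0 := by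
  by_contra! h0
  refine h ((setLIntegral_congr_fun measurableSet_Ici fun t ht ↦ ?_).trans lintegral_zero)
  exact ENNReal.ofReal_eq_zero.2 ((hanti ht).trans h0)

end Antitone

section Concave

variable {E : Type*} [AddCommGroup E] [Module ℝ E] {F : E → ℝ → ℝ} {p q : E} {y₁ y₂ l m : ℝ}

lemma smul_add_smul_superlevelSet_subset
    (hconc : ConcaveOn ℝ {x : E × ℝ | 0 < F x.1 x.2} (Function.uncurry F))
    (hl : 0 ≤ l) (hm : 0 ≤ m) (hlm : l + m = 1) (hy₁ : 0 ≤ y₁) (hy₂ : 0 ≤ y₂) :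
    l • superlevelSet (F p) y₁ + m • superlevelSet (F q) y₂ ⊆
      superlevelSet (F (l • p + m • q)) (l * y₁ + m * y₂) := by
  rintro _ ⟨_, ⟨t₁, ht₁, rfl⟩, _, ⟨t₂, ht₂, rfl⟩, rfl⟩
  have hcomb := hconc.2 (x := (p, t₁)) (y := (q, t₂)) (hy₁.trans_lt ht₁.2) (hy₂.trans_lt ht₂.2)
    hl hm hlm
  have hgap := convex_Ioi (0 : ℝ) (sub_pos.2 ht₁.2) (sub_pos.2 ht₂.2) hl hm hlm
  simp only [Function.uncurry_apply_pair, Prod.smul_mk, Prod.mk_add_mk, smul_eq_mul]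
    at hcomb hgap ⊢
  exact ⟨add_nonneg (mul_nonneg hl ht₁.1) (mul_nonneg hm ht₂.1), by linarith [mem_Ioi.1 hgap]⟩

variable (hanti : ∀ p, Antitone (F p)) (hbdd : ∀ p, BddAbove (Function.support (F p)))
  (hconc : ConcaveOn ℝ {x : E × ℝ | 0 < F x.1 x.2} (Function.uncurry F))
include hanti hbdd hconc

lemma le_volume_superlevelSet_smul_add_smul (hl : 0 ≤ l) (hm : 0 ≤ m) (hlm : l + m = 1)
    (hy₁ : 0 ≤ y₁) (hy₂ : 0 ≤ y₂) (hp : y₁ < F p 0) (hq : y₂ < F q 0) :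
    ENNReal.ofReal l * volume (superlevelSet (F p) y₁) +
        ENNReal.ofReal m * volume (superlevelSet (F q) y₂) ≤
      volume (superlevelSet (F (l • p + m • q)) (l * y₁ + m * y₂)) := by
  have hy : 0 ≤ l * y₁ + m * y₂ := by positivity
  rw [volume_superlevelSet (hanti p) (hbdd p) hy₁, volume_superlevelSet (hanti q) (hbdd q) hy₂,
    volume_superlevelSet (hanti _) (hbdd _) hy, ← ENNReal.ofReal_mul hl, ← ENNReal.ofReal_mul hm,
    ← ENNReal.ofReal_add (mul_nonneg hl (Real.sSup_nonneg fun t ht ↦ ht.1))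
      (mul_nonneg hm (Real.sSup_nonneg fun t ht ↦ ht.1))]
  exact ENNReal.ofReal_le_ofReal (mul_sSup_add_mul_sSup_le_of_subset hl hm ⟨0, le_rfl, hp⟩
    ⟨0, le_rfl, hq⟩ (bddAbove_superlevelSet (hbdd p) hy₁) (bddAbove_superlevelSet (hbdd q) hy₂)
    (bddAbove_superlevelSet (hbdd _) hy)
    (smul_add_smul_superlevelSet_subset hconc hl hm hlm hy₁ hy₂))

-- Measuring levels in units of the heights `F p 0`, `F q 0` makes all three superlevel sets
-- nonempty for the same `s ∈ (0, 1)` and empty for `s ≥ 1`.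
lemma le_volume_superlevelSet_smul_add_smul_mul (hl : 0 ≤ l) (hm : 0 ≤ m) (hlm : l + m = 1)
    (ha : 0 < F p 0) (hb : 0 < F q 0) {s : ℝ} (hs : 0 < s) :
    ENNReal.ofReal l * volume (superlevelSet (F p) (F p 0 * s)) +
        ENNReal.ofReal m * volume (superlevelSet (F q) (F q 0 * s)) ≤
      volume (superlevelSet (F (l • p + m • q)) ((l * F p 0 + m * F q 0) * s)) := by
  rcases lt_or_ge s 1 with hs1 | hs1
  · convert le_volume_superlevelSet_smul_add_smul hanti hbdd hconc hl hm hlm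
      (mul_nonneg ha.le hs.le) (mul_nonneg hb.le hs.le)
      (mul_lt_of_lt_one_right ha hs1) (mul_lt_of_lt_one_right hb hs1) using 3
    ring
  · rw [superlevelSet_eq_empty (hanti p) (le_mul_of_one_le_right ha.le hs1),
      superlevelSet_eq_empty (hanti q) (le_mul_of_one_le_right hb.le hs1)]
    simp

lemma le_lintegral_smul_add_smul (hnonneg : ∀ p t, 0 ≤ F p t) (hl : 0 ≤ l) (hm : 0 ≤ m)
    (hlm : l + m = 1) (ha : 0 < F p 0) (hb : 0 < F q 0) :
    ENNReal.ofReal (l * F p 0 + m * F q 0) *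
        (ENNReal.ofReal (l / F p 0) * (∫⁻ t in Ici 0, ENNReal.ofReal (F p t)) +
          ENNReal.ofReal (m / F q 0) * ∫⁻ t in Ici 0, ENNReal.ofReal (F q t)) ≤
      ∫⁻ t in Ici 0, ENNReal.ofReal (F (l • p + m • q) t) := by
  have hM : 0 < l * F p 0 + m * F q 0 := by simpa using convex_Ioi (0 : ℝ) ha hb hl hm hlm
  have rescale (r : E) {k : ℝ} (hk : 0 < k) := lintegral_Ioi_eq_ofReal_mul_lintegral_comp_mul_left
    (fun y ↦ volume (superlevelSet (F r) y)) hk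
  simp only [lintegral_Ici_eq_lintegral_volume_superlevelSet (hnonneg _) (hanti _)]
  rw [rescale p ha, rescale q hb, rescale _ hM, ← mul_assoc, ← mul_assoc,
    ← ENNReal.ofReal_mul (div_nonneg hl ha.le), ← ENNReal.ofReal_mul (div_nonneg hm hb.le),
    div_mul_cancel₀ _ ha.ne', div_mul_cancel₀ _ hb.ne',
    ← lintegral_const_mul' _ _ ENNReal.ofReal_ne_top,
    ← lintegral_const_mul' _ _ ENNReal.ofReal_ne_top]
  exact mul_le_mul_right ((le_lintegral_add _ _).trans (setLIntegral_mono' measurableSet_Ioi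
    fun s hs ↦ le_volume_superlevelSet_smul_add_smul_mul hanti hbdd hconc hl hm hlm ha hb hs)) _

theorem convex_setOf_le_lintegral (hnonneg : ∀ p t, 0 ≤ F p t) (c : ℝ≥0∞) :
    Convex ℝ {p | c ≤ ∫⁻ t in Ici 0, ENNReal.ofReal (F p t)} := by
  intro p hp q hq l m hl hm hlm
  rcases eq_or_ne c 0 with rfl | hc
  · simp
  have ha := pos_of_lintegral_ne_zero (hanti p) (ne_bot_of_le_ne_bot hc hp)
  have hb := pos_of_lintegral_ne_zero (hanti q) (ne_bot_of_le_ne_bot hc hq)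
  have hla := div_nonneg hl ha.le
  have hmb := div_nonneg hm hb.le
  calc c ≤ ENNReal.ofReal ((l * F p 0 + m * F q 0) * (l / F p 0 + m / F q 0)) * c :=
        le_mul_of_one_le_left (zero_le (α := ℝ≥0∞))
          (ENNReal.one_le_ofReal.2 (one_le_mul_add_div_add_div ha hb hl hm hlm))
    _ = ENNReal.ofReal (l * F p 0 + m * F q 0) *
          (ENNReal.ofReal (l / F p 0) * c + ENNReal.ofReal (m / F q 0) * c) := by
        rw [← add_mul, ← ENNReal.ofReal_add hla hmb, ← mul_assoc,
          ← ENNReal.ofReal_mul (by positivity)]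
    _ ≤ _ := by gcongr; exacts [hp, hq]
    _ ≤ _ := le_lintegral_smul_add_smul hanti hbdd hconc hnonneg hl hm hlm ha hb

end Concave

noncomputable def phi (s : ℝ) : ℝ := Real.exp (-s ^ 2 / 2)

lemma continuous_phi : Continuous phi := by
  unfold phi; fun_prop

lemma integrable_phi : Integrable phi :=
  (integrable_exp_neg_mul_sq (b := 1 / 2) (by norm_num)).congr
    (.of_forall fun s ↦ by simp only [phi]; ring_nf)

lemma integral_phi : ∫ s, phi s = √(2 * π) := by
  convert integral_gaussian (1 / 2) using 2 with s
  · simp only [phi]; ring_nf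
  · ring_nf

lemma Phi_nonneg (x : ℝ) : 0 ≤ Phi x :=
  div_nonneg (setIntegral_nonneg measurableSet_Iic fun _ _ ↦ (exp_pos _).le) (sqrt_nonneg _)

lemma Phi_le_one (x : ℝ) : Phi x ≤ 1 := by
  refine div_le_one_of_le₀ ?_ (sqrt_nonneg _)
  rw [← integral_phi]
  exact setIntegral_le_integral integrable_phi (.of_forall fun s ↦ (exp_pos _).le)

lemma Phi_zero : Phi 0 = 1 / 2 := by
  have hsymm : ∫ s in Iic 0, phi s = ∫ s in Ioi 0, phi s := by
    simpa [phi] using integral_comp_neg_Iic (0 : ℝ) phi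
  have hsum := intervalIntegral.integral_Iic_add_Ioi (b := 0) integrable_phi.integrableOn
    integrable_phi.integrableOn
  rw [integral_phi, ← hsymm] at hsum
  rw [Phi, div_eq_iff (by positivity)]
  change ∫ s in Iic 0, phi s = _
  linarith

lemma hasDerivAt_Phi (x : ℝ) : HasDerivAt Phi (phi x / √(2 * π)) x := by
  have hsplit (y : ℝ) : ∫ s in Iic y, phi s = (∫ s in Iic 0, phi s) + ∫ s in (0)..y, phi s := by
    rw [← intervalIntegral.integral_Iic_sub_Iic integrable_phi.integrableOn
      integrable_phi.integrableOn, add_sub_cancel]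
  have hint : HasDerivAt (fun y ↦ ∫ s in (0)..y, phi s) (phi x) x :=
    intervalIntegral.integral_hasDerivAt_right integrable_phi.intervalIntegrable
      (continuous_phi.stronglyMeasurableAtFilter _ _) continuous_phi.continuousAt
  have hPhi : Phi = fun y ↦ ((∫ s in Iic 0, phi s) + ∫ s in (0)..y, phi s) / √(2 * π) :=
    funext fun y ↦ by rw [← hsplit]; rfl
  rw [hPhi]
  exact (hint.const_add _).div_const _

lemma deriv_Phi : deriv Phi = fun x ↦ phi x / √(2 * π) :=
  funext fun x ↦ (hasDerivAt_Phi x).deriv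

lemma differentiable_Phi : Differentiable ℝ Phi := fun x ↦ (hasDerivAt_Phi x).differentiableAt

lemma monotone_Phi : Monotone Phi :=
  monotone_of_deriv_nonneg differentiable_Phi fun x ↦ by
    rw [deriv_Phi]; exact div_nonneg (exp_pos _).le (sqrt_nonneg _)

lemma concaveOn_Phi : ConcaveOn ℝ (Ici 0) Phi := by
  refine AntitoneOn.concaveOn_of_deriv (convex_Ici 0) differentiable_Phi.continuous.continuousOn
    differentiable_Phi.differentiableOn ?_
  rw [interior_Ici, deriv_Phi]
  intro x hx y _ hxy
  rw [div_le_div_iff_of_pos_right (by positivity)]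
  exact exp_le_exp.2 (by nlinarith [mem_Ioi.1 hx])

lemma convexOn_Phi : ConvexOn ℝ (Iic 0) Phi := by
  refine MonotoneOn.convexOn_of_deriv (convex_Iic 0) differentiable_Phi.continuous.continuousOn
    differentiable_Phi.differentiableOn ?_
  rw [interior_Iic, deriv_Phi]
  intro x _ y hy hxy
  rw [div_le_div_iff_of_pos_right (by positivity)]
  exact exp_le_exp.2 (by nlinarith [mem_Iio.1 hy])

noncomputable def gIntegrand (ε : ℝ) (p : ℝ × ℝ) (t : ℝ) : ℝ :=
  max (Phi (p.2 - t) - Phi (p.1 + t) - (1 - ε)) 0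

section Integrand

variable {ε : ℝ}

lemma gIntegrand_nonneg (ε : ℝ) (p : ℝ × ℝ) (t : ℝ) : 0 ≤ gIntegrand ε p t := le_max_right _ _

lemma antitone_gIntegrand (ε : ℝ) (p : ℝ × ℝ) : Antitone (gIntegrand ε p) := fun s t hst ↦ by
  have h₁ := monotone_Phi (show p.2 - t ≤ p.2 - s by linarith)
  have h₂ := monotone_Phi (show p.1 + s ≤ p.1 + t by linarith)
  exact max_le_max_right _ (by linarith)

lemma gIntegrand_pos_iff {p : ℝ × ℝ} {t : ℝ} :
    0 < gIntegrand ε p t ↔ 1 - ε < Phi (p.2 - t) - Phi (p.1 + t) := by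
  rw [gIntegrand, lt_max_iff, lt_self_iff_false, or_false, sub_pos]

lemma continuous_gIntegrand (ε : ℝ) : Continuous (Function.uncurry (gIntegrand ε)) := by
  have := differentiable_Phi.continuous
  unfold gIntegrand Function.uncurry
  fun_prop

lemma add_neg_and_pos_of_gIntegrand_pos (hε : ε < 1 / 2) {p : ℝ × ℝ} {t : ℝ}
    (h : 0 < gIntegrand ε p t) : p.1 + t < 0 ∧ 0 < p.2 - t := by
  have hgap := gIntegrand_pos_iff.1 h
  constructor
  · by_contra! h0
    linarith [monotone_Phi h0, Phi_le_one (p.2 - t), Phi_zero]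
  · by_contra! h0
    linarith [monotone_Phi h0, Phi_nonneg (p.1 + t), Phi_zero]

lemma gIntegrand_eq_zero_of_le (hε : ε < 1 / 2) {p : ℝ × ℝ} {t : ℝ} (ht : p.2 ≤ t) :
    gIntegrand ε p t = 0 :=
  (gIntegrand_nonneg ε p t).eq_or_lt.elim Eq.symm fun h ↦
    absurd (add_neg_and_pos_of_gIntegrand_pos hε h).2 (by linarith)

lemma bddAbove_support_gIntegrand (hε : ε < 1 / 2) (p : ℝ × ℝ) :
    BddAbove (Function.support (gIntegrand ε p)) :=
  ⟨p.2, fun _ ht ↦ le_of_not_gt fun h ↦ ht (gIntegrand_eq_zero_of_le hε h.le)⟩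

lemma concaveOn_gIntegrand (hε : ε < 1 / 2) :
    ConcaveOn ℝ {x : (ℝ × ℝ) × ℝ | 0 < gIntegrand ε x.1 x.2} (Function.uncurry (gIntegrand ε)) := by
  let L₁ : (ℝ × ℝ) × ℝ →ₗ[ℝ] ℝ := LinearMap.snd ℝ ℝ ℝ ∘ₗ LinearMap.fst ℝ (ℝ × ℝ) ℝ -
    LinearMap.snd ℝ (ℝ × ℝ) ℝ
  let L₂ : (ℝ × ℝ) × ℝ →ₗ[ℝ] ℝ := LinearMap.fst ℝ ℝ ℝ ∘ₗ LinearMap.fst ℝ (ℝ × ℝ) ℝ +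
    LinearMap.snd ℝ (ℝ × ℝ) ℝ
  let K := L₂ ⁻¹' Iic 0 ∩ L₁ ⁻¹' Ici 0
  have hK : Convex ℝ K :=
    ((convex_Iic 0).linear_preimage L₂).inter ((convex_Ici 0).linear_preimage L₁)
  have hD : ConcaveOn ℝ K fun x ↦ Phi (L₁ x) - Phi (L₂ x) :=
    ((concaveOn_Phi.comp_linearMap L₁).subset inter_subset_right hK).sub
      ((convexOn_Phi.comp_linearMap L₂).subset inter_subset_left hK)
  have hset : {x : (ℝ × ℝ) × ℝ | 0 < gIntegrand ε x.1 x.2} =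
      {x ∈ K | 1 - ε < Phi (L₁ x) - Phi (L₂ x)} := by
    ext x
    refine ⟨fun h ↦ ?_, fun h ↦ gIntegrand_pos_iff.2 h.2⟩
    obtain ⟨h₁, h₂⟩ := add_neg_and_pos_of_gIntegrand_pos hε h
    exact ⟨⟨h₁.le, h₂.le⟩, gIntegrand_pos_iff.1 h⟩
  rw [hset]
  refine ((hD.add_const (-(1 - ε))).subset (sep_subset _ _) (hD.convex_gt _)).congr fun x hx ↦ ?_
  have hx' : 1 - ε < Phi (x.1.2 - x.2) - Phi (x.1.1 + x.2) := hx.2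
  show Phi (x.1.2 - x.2) - Phi (x.1.1 + x.2) + -(1 - ε) =
    max (Phi (x.1.2 - x.2) - Phi (x.1.1 + x.2) - (1 - ε)) 0
  rw [max_eq_left (by linarith)]
  ring

lemma gIntegrand_eq_zero_of_mem_Ici_sdiff_Icc (hε : ε < 1 / 2) {p : ℝ × ℝ} {B t : ℝ}
    (hB : p.2 ≤ B) (ht : t ∈ Ici 0 \ Icc 0 B) : gIntegrand ε p t = 0 :=
  gIntegrand_eq_zero_of_le hε (hB.trans (le_of_not_ge fun h ↦ ht.2 ⟨ht.1, h⟩))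

lemma integrableOn_gIntegrand (hε : ε < 1 / 2) (p : ℝ × ℝ) :
    IntegrableOn (gIntegrand ε p) (Ici 0) :=
  ((continuous_gIntegrand ε).uncurry_left p).continuousOn.integrableOn_Icc.of_forall_sdiff_eq_zero
    measurableSet_Ici fun _ ↦ gIntegrand_eq_zero_of_mem_Ici_sdiff_Icc hε le_rfl

lemma g_eq_setIntegral_Icc (hε : ε < 1 / 2) {p : ℝ × ℝ} {B : ℝ} (hB : p.2 ≤ B) :
    g ε p.1 p.2 = ∫ t in Icc 0 B, gIntegrand ε p t := by
  rw [g, ← integral_Ici_eq_integral_Ioi]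
  exact setIntegral_eq_of_subset_of_forall_sdiff_eq_zero measurableSet_Ici Icc_subset_Ici_self
    fun _ ↦ gIntegrand_eq_zero_of_mem_Ici_sdiff_Icc hε hB

lemma continuous_g (hε : ε < 1 / 2) : Continuous fun p : ℝ × ℝ ↦ g ε p.1 p.2 :=
  continuous_iff_continuousAt.2 fun p₀ ↦
    (continuous_parametric_integral_of_continuous (continuous_gIntegrand ε)
      (isCompact_Icc (a := 0) (b := p₀.2 + 1))).continuousAt.congr <| by
      filter_upwards [continuous_snd.continuousAt.eventually_lt continuousAt_const
        (lt_add_one p₀.2)] with p hp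
      exact (g_eq_setIntegral_Icc hε hp.le).symm

lemma ofReal_g (hε : ε < 1 / 2) (p : ℝ × ℝ) :
    ENNReal.ofReal (g ε p.1 p.2) = ∫⁻ t in Ici 0, ENNReal.ofReal (gIntegrand ε p t) := by
  rw [g, ← integral_Ici_eq_integral_Ioi]
  exact ofReal_integral_eq_lintegral_ofReal (integrableOn_gIntegrand hε p)
    (.of_forall (gIntegrand_nonneg ε p))

end Integrand

theorem stmt_15 (ε δ : ℝ) (hε : ε ∈ Set.Ioo (0:ℝ) (1/2)) (hδ : 0 < δ) :
    let Z₀ : Set (ℝ × ℝ) := {p | δ ≤ g ε p.1 p.2}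
    IsClosed Z₀ ∧ Convex ℝ Z₀ ∧ Z₀ ⊆ {p : ℝ × ℝ | p.1 < 0 ∧ 0 < p.2} := by
  intro Z₀
  have hε' : ε < 1 / 2 := hε.2
  have hZ₀ : Z₀ = {p | ENNReal.ofReal δ ≤ ∫⁻ t in Ici 0, ENNReal.ofReal (gIntegrand ε p t)} := by
    ext p
    change δ ≤ g ε p.1 p.2 ↔ ENNReal.ofReal δ ≤ _
    rw [← ofReal_g hε', ENNReal.ofReal_le_ofReal_iff
      (show 0 ≤ g ε p.1 p.2 from integral_nonneg fun t ↦ gIntegrand_nonneg ε p t)]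
  refine ⟨isClosed_le continuous_const (continuous_g hε'), ?_, fun p hp ↦ ?_⟩
  · rw [hZ₀]
    exact convex_setOf_le_lintegral (antitone_gIntegrand ε) (bddAbove_support_gIntegrand hε')
      (concaveOn_gIntegrand hε') (gIntegrand_nonneg ε) _
  · have hpos : 0 < gIntegrand ε p 0 := pos_of_lintegral_ne_zero (antitone_gIntegrand ε p) <| by
      rw [← ofReal_g hε']
      exact (ENNReal.ofReal_pos.2 (hδ.trans_le hp)).ne'
    simpa using add_neg_and_pos_of_gIntegrand_pos hε' hpos
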